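/- arXiv:2601.04077 — 6 statements merged into one kernel-verified Lean document; each statement's English description precedes it below -/
import Mathlib

section
/- Let v ∈ ℝ with 0 < v < 1, and define φ(x,t) = 4·arctan( v·cosh(x/√(1 − v²)) / sinh(v·t/√(1 − v²)) ). Then for every (x,t) with t ≠ 0, φ satisfies the Sine–Gordon equation ∂²φ/∂x² − ∂²φ/∂t² = sin(φ). -/
open Real

lemma key_algebra (v g sx cx st ct : ℝ) (hg : g ≠ 0) (hst : st ≠ 0)
    (hcx : cx ^ 2 = 1 + sx ^ 2) (hct : ct ^ 2 = 1 + st ^ 2) (hg2 : g ^ 2 = 1 - v ^ 2) :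
    (4 * (v * (cx * (1/g) * (1/g)) / st) * (1 + (v * cx / st) ^ 2)
        - 8 * (v * cx / st) * (v * (sx * (1/g)) / st) ^ 2) / (1 + (v * cx / st) ^ 2) ^ 2
      - (4 * ((v ^ 3 * cx / g ^ 2) * (2 * ct ^ 2 - st ^ 2) / st ^ 3) * (1 + (v * cx / st) ^ 2)
        - 8 * (v * cx / st) * (-(v * cx * (ct * (v / g))) / st ^ 2) ^ 2) / (1 + (v * cx / st) ^ 2) ^ 2
      = 4 * (v * cx / st) * (1 - (v * cx / st) ^ 2) / (1 + (v * cx / st) ^ 2) ^ 2 := by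
  have hD : (1 + (v * cx / st) ^ 2) ≠ 0 := by positivity
  rw [div_sub_div_same, div_eq_div_iff (pow_ne_zero 2 hD) (pow_ne_zero 2 hD)]
  field_simp
  linear_combination 8 * v ^ 3 * cx * st ^ 2 * hcx - 8 * v ^ 3 * cx * st ^ 2 * hct - 4 * v * cx * st ^ 2 * (st ^ 2 - v ^ 2 * cx ^ 2) * hg2

lemma sin_four_arctan (u : ℝ) :
    Real.sin (4 * Real.arctan u) = 4 * u * (1 - u ^ 2) / (1 + u ^ 2) ^ 2 := by
  have h1 : (0:ℝ) < 1 + u ^ 2 := by positivity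
  have hsne : Real.sqrt (1 + u ^ 2) ≠ 0 := by positivity
  have hs : Real.sqrt (1 + u ^ 2) ^ 2 = 1 + u ^ 2 := Real.sq_sqrt h1.le
  have h4 : (4:ℝ) * Real.arctan u = 2 * (2 * Real.arctan u) := by ring
  rw [h4, Real.sin_two_mul, Real.sin_two_mul, Real.cos_two_mul,
    Real.sin_arctan, Real.cos_arctan]
  field_simp
  rw [show √(1 + u ^ 2) ^ 4 = (√(1 + u ^ 2) ^ 2) ^ 2 by ring, hs]
  ring

lemma sec_deriv_four_arctan (w w1 : ℝ → ℝ) (w2 : ℝ) (x : ℝ)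
    (hw1 : ∀ᶠ y in nhds x, HasDerivAt w (w1 y) y)
    (hw2 : HasDerivAt w1 w2 x) :
    iteratedDeriv 2 (fun y => 4 * Real.arctan (w y)) x
      = (4 * w2 * (1 + (w x) ^ 2) - 8 * w x * (w1 x) ^ 2) / (1 + (w x) ^ 2) ^ 2 := by
  have hne : (1 + (w x) ^ 2) ≠ 0 := by positivity
  have hG : deriv (fun y => 4 * Real.arctan (w y)) =ᶠ[nhds x]
      fun y => 4 * w1 y / (1 + (w y) ^ 2) := by
    filter_upwards [hw1] with y hy
    rw [(hy.arctan.const_mul 4).deriv]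
    ring
  have h2 : iteratedDeriv 2 (fun y => 4 * Real.arctan (w y)) x
      = deriv (deriv (fun y => 4 * Real.arctan (w y))) x := by
    rw [iteratedDeriv_succ, iteratedDeriv_one]
  rw [h2, hG.deriv_eq]
  have hx : HasDerivAt w (w1 x) x := hw1.self_of_nhds
  have hD : HasDerivAt (fun y => 1 + (w y) ^ 2) (2 * w x ^ 1 * w1 x) x :=
    (hx.pow 2).const_add 1
  have hN : HasDerivAt (fun y => 4 * w1 y) (4 * w2) x := hw2.const_mul 4
  have hND : HasDerivAt (fun y => 4 * w1 y / (1 + w y ^ 2)) _ x := hN.div hD hne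
  rw [hND.deriv]
  ring

/-- The soliton–antisoliton pair
`φ(x,t) = 4·arctan(v·cosh(x/√(1-v²)) / sinh(vt/√(1-v²)))` with `0 < v < 1`
satisfies the Sine–Gordon equation `φ_xx - φ_tt = sin φ` at every point with `t ≠ 0`. -/
theorem soliton_antisoliton_solves_sine_gordon (v : ℝ) (hv0 : 0 < v) (hv1 : v < 1)
    (φ : ℝ → ℝ → ℝ)
    (hφ : ∀ x t : ℝ,
      φ x t = 4 * Real.arctan
        (v * Real.cosh (x / Real.sqrt (1 - v ^ 2))
          / Real.sinh (v * t / Real.sqrt (1 - v ^ 2)))) :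
    ∀ x t : ℝ, t ≠ 0 →
      iteratedDeriv 2 (fun x' => φ x' t) x - iteratedDeriv 2 (fun t' => φ x t') t
        = Real.sin (φ x t) := by
  intro x t ht
  set g : ℝ := Real.sqrt (1 - v ^ 2) with hgdef
  have hv2 : (0:ℝ) < 1 - v ^ 2 := by nlinarith
  have hgpos : 0 < g := Real.sqrt_pos.mpr hv2
  have hg : g ≠ 0 := ne_of_gt hgpos
  have hg2 : g ^ 2 = 1 - v ^ 2 := Real.sq_sqrt hv2.le
  have hst : Real.sinh (v * t / g) ≠ 0 :=
    Real.sinh_ne_zero.mpr (div_ne_zero (mul_ne_zero (ne_of_gt hv0) ht) hg)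
  set sx := Real.sinh (x / g)
  set cx := Real.cosh (x / g)
  set st := Real.sinh (v * t / g)
  set ct := Real.cosh (v * t / g)
  -- x-direction second derivative
  have hXX : iteratedDeriv 2 (fun x' => φ x' t) x
      = (4 * (v * (cx * (1/g) * (1/g)) / st) * (1 + (v * cx / st) ^ 2)
          - 8 * (v * cx / st) * (v * (sx * (1/g)) / st) ^ 2) / (1 + (v * cx / st) ^ 2) ^ 2 := by
    have hfun : (fun x' => φ x' t)
        = fun x' => 4 * Real.arctan ((fun y => v * Real.cosh (y / g) / st) x') := by
      funext x'; rw [hφ]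
    rw [hfun]
    have hw1 : ∀ᶠ y in nhds x,
        HasDerivAt (fun y => v * Real.cosh (y / g) / st)
          ((fun y => v * (Real.sinh (y / g) * (1/g)) / st) y) y := by
      filter_upwards with y
      exact (((hasDerivAt_id y).div_const g).cosh.const_mul v).div_const st
    have hw2 : HasDerivAt (fun y => v * (Real.sinh (y / g) * (1/g)) / st)
        (v * (cx * (1/g) * (1/g)) / st) x := by
      exact ((((hasDerivAt_id x).div_const g).sinh.mul_const (1/g)).const_mul v).div_const st
    exact sec_deriv_four_arctan _ _ _ x hw1 hw2
  -- t-direction second derivative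
  have hTT : iteratedDeriv 2 (fun t' => φ x t') t
      = (4 * ((v ^ 3 * cx / g ^ 2) * (2 * ct ^ 2 - st ^ 2) / st ^ 3) * (1 + (v * cx / st) ^ 2)
          - 8 * (v * cx / st) * (-(v * cx * (ct * (v / g))) / st ^ 2) ^ 2)
        / (1 + (v * cx / st) ^ 2) ^ 2 := by
    have hfun : (fun t' => φ x t')
        = fun t' => 4 * Real.arctan ((fun s => v * cx / Real.sinh (v * s / g)) t') := by
      funext t'; rw [hφ]
    rw [hfun]
    have hsinh : ∀ s : ℝ, HasDerivAt (fun s => Real.sinh (v * s / g))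
        (Real.cosh (v * s / g) * (v * 1 / g)) s := by
      intro s
      exact (((hasDerivAt_id s).const_mul v).div_const g).sinh
    have hsne : ∀ s : ℝ, s ≠ 0 → Real.sinh (v * s / g) ≠ 0 := fun s hs =>
      Real.sinh_ne_zero.mpr (div_ne_zero (mul_ne_zero (ne_of_gt hv0) hs) hg)
    have hw1 : ∀ᶠ s in nhds t,
        HasDerivAt (fun s => v * cx / Real.sinh (v * s / g))
          ((fun s => -(v * cx * (Real.cosh (v * s / g) * (v / g))) / (Real.sinh (v * s / g)) ^ 2) s) s := by
      have hmem : {s : ℝ | s ≠ 0} ∈ nhds t := (isOpen_ne).mem_nhds ht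
      filter_upwards [hmem] with s hs
      have h : HasDerivAt (fun s => v * cx / Real.sinh (v * s / g)) _ s :=
        (hasDerivAt_const s (v * cx)).div (hsinh s) (hsne s hs)
      convert h using 1
      ring
    have hw2 : HasDerivAt
        (fun s => -(v * cx * (Real.cosh (v * s / g) * (v / g))) / (Real.sinh (v * s / g)) ^ 2)
        ((v ^ 3 * cx / g ^ 2) * (2 * ct ^ 2 - st ^ 2) / st ^ 3) t := by
      have hN : HasDerivAt (fun s => -(v * cx * (Real.cosh (v * s / g) * (v / g))))
          (-(v * cx * ((st * (v * 1 / g)) * (v / g)))) t := by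
        exact ((((((hasDerivAt_id t).const_mul v).div_const g).cosh).mul_const (v/g)).const_mul (v*cx)).neg
      have hD : HasDerivAt (fun s => (Real.sinh (v * s / g)) ^ 2)
          (2 * st ^ 1 * (ct * (v * 1 / g))) t := (hsinh t).pow 2
      have h : HasDerivAt
          (fun s => -(v * cx * (Real.cosh (v * s / g) * (v / g))) / (Real.sinh (v * s / g)) ^ 2) _ t :=
        hN.div hD (pow_ne_zero 2 hst)
      convert h using 1
      have hct2 : ct ^ 2 = 1 + st ^ 2 := by
        have := Real.cosh_sq_sub_sinh_sq (v * t / g); linarith [sq_nonneg st]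
      field_simp
      ring
    exact sec_deriv_four_arctan _ _ _ t hw1 hw2
  rw [hXX, hTT, hφ, sin_four_arctan]
  exact key_algebra v g sx cx st ct hg hst
    (by have := Real.cosh_sq_sub_sinh_sq (x / g); linarith)
    (by have := Real.cosh_sq_sub_sinh_sq (v * t / g); linarith)
    hg2
end

section
/- Let b ∈ ℝ with b ≠ 0, and let φ₀, φ₁ : ℝ² → ℝ be twice continuously differentiable functions of (ρ, τ) satisfying the Bäcklund relations ∂ρ(φ₁ − φ₀) = 2b·sin((φ₁ + φ₀)/2) and ∂τ(φ₁ + φ₀) = (2/b)·sin((φ₁ − φ₀)/2) at every point. If φ₀ satisfies the Sine–Gordon equation ∂τ∂ρ φ₀ = sin(φ₀), then φ₁ also satisfies ∂τ∂ρ φ₁ = sin(φ₁). -/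
private lemma pd1 {F : ℝ × ℝ → ℝ} (hF : ContDiff ℝ 2 F) (ρ τ : ℝ) :
    HasDerivAt (fun ρ' => F (ρ', τ)) (fderiv ℝ F (ρ, τ) (1, 0)) ρ := by
  have h1 : HasFDerivAt F (fderiv ℝ F (ρ, τ)) (ρ, τ) :=
    (hF.differentiable (by norm_num) (ρ, τ)).hasFDerivAt
  have h2 : HasDerivAt (fun ρ' : ℝ => ((ρ', τ) : ℝ × ℝ)) (1, 0) ρ :=
    (hasDerivAt_id ρ).prodMk (hasDerivAt_const ρ τ)
  exact h1.comp_hasDerivAt ρ h2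

private lemma pd2 {F : ℝ × ℝ → ℝ} (hF : ContDiff ℝ 2 F) (ρ τ : ℝ) :
    HasDerivAt (fun τ' => F (ρ, τ')) (fderiv ℝ F (ρ, τ) (0, 1)) τ := by
  have h1 : HasFDerivAt F (fderiv ℝ F (ρ, τ)) (ρ, τ) :=
    (hF.differentiable (by norm_num) (ρ, τ)).hasFDerivAt
  have h2 : HasDerivAt (fun τ' : ℝ => ((ρ, τ') : ℝ × ℝ)) (0, 1) τ :=
    (hasDerivAt_const τ ρ).prodMk (hasDerivAt_id τ)
  exact h1.comp_hasDerivAt τ h2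

private lemma pd1diff {F : ℝ × ℝ → ℝ} (hF : ContDiff ℝ 2 F) (ρ τ : ℝ) :
    DifferentiableAt ℝ (fun τ' => fderiv ℝ F (ρ, τ') (1, 0)) τ := by
  have h : ContDiff ℝ 1 (fun p : ℝ × ℝ => fderiv ℝ F p (1, 0)) :=
    (hF.fderiv_right (by norm_num)).clm_apply contDiff_const
  have h2 : ContDiff ℝ 1 (fun τ' : ℝ => ((ρ, τ') : ℝ × ℝ)) :=
    contDiff_const.prodMk contDiff_id
  exact ((h.comp h2).differentiable one_ne_zero) τ

/-- Bäcklund transformation for the Sine–Gordon equation: if `φ₀, φ₁` (functions of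
the light-cone coordinates `(ρ, τ)`) are `C²` and satisfy the Bäcklund relations
`∂ρ(φ₁ - φ₀) = 2b·sin((φ₁+φ₀)/2)` and `∂τ(φ₁ + φ₀) = (2/b)·sin((φ₁-φ₀)/2)`,
and `φ₀` solves `∂τ∂ρ φ₀ = sin φ₀`, then `φ₁` solves `∂τ∂ρ φ₁ = sin φ₁`. -/
theorem backlund_sine_gordon (b : ℝ) (hb : b ≠ 0) (φ₀ φ₁ : ℝ → ℝ → ℝ)
    (h₀ : ContDiff ℝ 2 (fun p : ℝ × ℝ => φ₀ p.1 p.2))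
    (h₁ : ContDiff ℝ 2 (fun p : ℝ × ℝ => φ₁ p.1 p.2))
    (hB1 : ∀ ρ τ : ℝ, deriv (fun ρ' => φ₁ ρ' τ - φ₀ ρ' τ) ρ
        = 2 * b * Real.sin ((φ₁ ρ τ + φ₀ ρ τ) / 2))
    (hB2 : ∀ ρ τ : ℝ, deriv (fun τ' => φ₁ ρ τ' + φ₀ ρ τ') τ
        = (2 / b) * Real.sin ((φ₁ ρ τ - φ₀ ρ τ) / 2))
    (hSG0 : ∀ ρ τ : ℝ,
      deriv (fun τ' => deriv (fun ρ' => φ₀ ρ' τ') ρ) τ = Real.sin (φ₀ ρ τ)) :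
    ∀ ρ τ : ℝ,
      deriv (fun τ' => deriv (fun ρ' => φ₁ ρ' τ') ρ) τ = Real.sin (φ₁ ρ τ) := by
  intro ρ τ
  set F₀ : ℝ × ℝ → ℝ := fun p => φ₀ p.1 p.2 with hF₀def
  set F₁ : ℝ × ℝ → ℝ := fun p => φ₁ p.1 p.2 with hF₁def
  -- partial ρ derivatives
  have D1₀ : ∀ ρ' τ' : ℝ, HasDerivAt (fun r => φ₀ r τ') (fderiv ℝ F₀ (ρ', τ') (1, 0)) ρ' :=
    fun ρ' τ' => pd1 h₀ ρ' τ'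
  have D1₁ : ∀ ρ' τ' : ℝ, HasDerivAt (fun r => φ₁ r τ') (fderiv ℝ F₁ (ρ', τ') (1, 0)) ρ' :=
    fun ρ' τ' => pd1 h₁ ρ' τ'
  -- Step A: express ∂ρ φ₁ via Bäcklund relation 1
  have stepA : ∀ τ' : ℝ, deriv (fun r => φ₁ r τ') ρ
      = deriv (fun r => φ₀ r τ') ρ + 2 * b * Real.sin ((φ₁ ρ τ' + φ₀ ρ τ') / 2) := by
    intro τ'
    have hsub : deriv (fun r => φ₁ r τ' - φ₀ r τ') ρ
        = fderiv ℝ F₁ (ρ, τ') (1, 0) - fderiv ℝ F₀ (ρ, τ') (1, 0) :=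
      ((D1₁ ρ τ').sub (D1₀ ρ τ')).deriv
    have h1 := hB1 ρ τ'
    rw [hsub] at h1
    rw [(D1₁ ρ τ').deriv, (D1₀ ρ τ').deriv]
    linarith
  -- rewrite the inner function
  have hfun : (fun τ' => deriv (fun r => φ₁ r τ') ρ)
      = fun τ' => deriv (fun r => φ₀ r τ') ρ + 2 * b * Real.sin ((φ₁ ρ τ' + φ₀ ρ τ') / 2) :=
    funext stepA
  rw [hfun]
  -- differentiability of τ' ↦ ∂ρ φ₀
  have hfun0 : (fun τ' => deriv (fun r => φ₀ r τ') ρ)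
      = fun τ' => fderiv ℝ F₀ (ρ, τ') (1, 0) := funext fun τ' => (D1₀ ρ τ').deriv
  have hdiff0 : DifferentiableAt ℝ (fun τ' => deriv (fun r => φ₀ r τ') ρ) τ := by
    rw [hfun0]; exact pd1diff h₀ ρ τ
  -- derivative of the sine term
  have hsum : HasDerivAt (fun τ' => φ₁ ρ τ' + φ₀ ρ τ')
      (fderiv ℝ F₁ (ρ, τ) (0, 1) + fderiv ℝ F₀ (ρ, τ) (0, 1)) τ :=
    (pd2 h₁ ρ τ).add (pd2 h₀ ρ τ)
  have hS : fderiv ℝ F₁ (ρ, τ) (0, 1) + fderiv ℝ F₀ (ρ, τ) (0, 1)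
      = (2 / b) * Real.sin ((φ₁ ρ τ - φ₀ ρ τ) / 2) := by
    rw [← hsum.deriv]; exact hB2 ρ τ
  have hsin : HasDerivAt (fun τ' => 2 * b * Real.sin ((φ₁ ρ τ' + φ₀ ρ τ') / 2))
      (2 * b * (Real.cos ((φ₁ ρ τ + φ₀ ρ τ) / 2)
        * (((2 / b) * Real.sin ((φ₁ ρ τ - φ₀ ρ τ) / 2)) / 2))) τ := by
    have h2 : HasDerivAt (fun τ' => (φ₁ ρ τ' + φ₀ ρ τ') / 2)
        (((2 / b) * Real.sin ((φ₁ ρ τ - φ₀ ρ τ) / 2)) / 2) τ := by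
      have := hsum.div_const 2
      rwa [hS] at this
    exact (h2.sin).const_mul (2 * b)
  -- put it together
  rw [deriv_fun_add hdiff0 hsin.differentiableAt, hSG0 ρ τ, hsin.deriv]
  have key : Real.sin (φ₁ ρ τ) - Real.sin (φ₀ ρ τ)
      = 2 * Real.sin ((φ₁ ρ τ - φ₀ ρ τ) / 2) * Real.cos ((φ₁ ρ τ + φ₀ ρ τ) / 2) :=
    Real.sin_sub_sin _ _
  have h3 : 2 * b * (Real.cos ((φ₁ ρ τ + φ₀ ρ τ) / 2)
      * (((2 / b) * Real.sin ((φ₁ ρ τ - φ₀ ρ τ) / 2)) / 2))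
      = 2 * Real.sin ((φ₁ ρ τ - φ₀ ρ τ) / 2) * Real.cos ((φ₁ ρ τ + φ₀ ρ τ) / 2) := by
    field_simp
  rw [h3]
  linarith [key]
end

section
/- Let v : ℝ × ℝ → ℝ be a smooth solution of the modified KdV equation ∂v/∂t − 6·v²·∂v/∂x + ∂³v/∂x³ = 0, and define u : ℝ × ℝ → ℝ by the Miura transformation u = v² + ∂v/∂x. Then u satisfies the KdV equation ∂u/∂t − 6·u·∂u/∂x + ∂³u/∂x³ = 0. -/
noncomputable def Dv (w : ℝ × ℝ) (f : ℝ × ℝ → ℝ) : ℝ × ℝ → ℝ := fun p => fderiv ℝ f p w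


lemma Dv_contDiff (w : ℝ × ℝ) {f : ℝ × ℝ → ℝ} (hf : ContDiff ℝ (⊤ : ℕ∞) f) :
    ContDiff ℝ (⊤ : ℕ∞) (Dv w f) := by
  have h1 : ContDiff ℝ (⊤ : ℕ∞) (fderiv ℝ f) := hf.fderiv_right (by simp)
  exact (ContinuousLinearMap.apply ℝ ℝ w).contDiff.comp h1

lemma deriv_slice1 {f : ℝ × ℝ → ℝ} (hf : ContDiff ℝ (⊤ : ℕ∞) f) (x t : ℝ) :
    deriv (fun x' => f (x', t)) x = Dv (1, 0) f (x, t) := by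
  have hl : HasDerivAt (fun x' : ℝ => ((x', t) : ℝ × ℝ)) (1, 0) x :=
    (hasDerivAt_id x).prodMk (hasDerivAt_const x t)
  exact ((hf.differentiable (by simp) (x, t)).hasFDerivAt.comp_hasDerivAt x hl).deriv

lemma deriv_slice2 {f : ℝ × ℝ → ℝ} (hf : ContDiff ℝ (⊤ : ℕ∞) f) (x t : ℝ) :
    deriv (fun t' => f (x, t')) t = Dv (0, 1) f (x, t) := by
  have hl : HasDerivAt (fun t' : ℝ => ((x, t') : ℝ × ℝ)) (0, 1) t :=
    (hasDerivAt_const t x).prodMk (hasDerivAt_id t)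
  exact ((hf.differentiable (by simp) (x, t)).hasFDerivAt.comp_hasDerivAt t hl).deriv

lemma iter3_slice {f : ℝ × ℝ → ℝ} (hf : ContDiff ℝ (⊤ : ℕ∞) f) (x t : ℝ) :
    iteratedDeriv 3 (fun x' => f (x', t)) x = Dv (1,0) (Dv (1,0) (Dv (1,0) f)) (x, t) := by
  have hf1 := Dv_contDiff (1,0) hf
  have hf2 := Dv_contDiff (1,0) hf1
  have h1 : deriv (fun x' => f (x', t)) = fun x' => Dv (1,0) f (x', t) :=
    funext fun y => deriv_slice1 hf y t
  have h2 : deriv (fun x' => Dv (1,0) f (x', t)) = fun x' => Dv (1,0) (Dv (1,0) f) (x', t) :=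
    funext fun y => deriv_slice1 hf1 y t
  have h3 : deriv (fun x' => Dv (1,0) (Dv (1,0) f) (x', t))
      = fun x' => Dv (1,0) (Dv (1,0) (Dv (1,0) f)) (x', t) :=
    funext fun y => deriv_slice1 hf2 y t
  rw [show (3:ℕ) = 2+1 from rfl, iteratedDeriv_succ, show (2:ℕ) = 1+1 from rfl,
    iteratedDeriv_succ, iteratedDeriv_one, h1, h2, h3]

lemma Dv_Dv {f : ℝ × ℝ → ℝ} (hf : ContDiff ℝ (⊤ : ℕ∞) f) (w w' : ℝ × ℝ) (p : ℝ × ℝ) :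
    Dv w (Dv w' f) p = fderiv ℝ (fderiv ℝ f) p w w' := by
  have h1 : HasFDerivAt (fderiv ℝ f) (fderiv ℝ (fderiv ℝ f) p) p :=
    ((hf.fderiv_right (m := (⊤ : ℕ∞)) (by simp)).differentiable (by simp) p).hasFDerivAt
  have h2 := (ContinuousLinearMap.apply ℝ ℝ w').hasFDerivAt.comp p h1
  have h3 : Dv w (Dv w' f) p = (fderiv ℝ (fun q => (ContinuousLinearMap.apply ℝ ℝ w') (fderiv ℝ f q)) p) w := rfl
  rw [h3, show (fun q => (ContinuousLinearMap.apply ℝ ℝ w') (fderiv ℝ f q))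
      = (⇑(ContinuousLinearMap.apply ℝ ℝ w') ∘ fderiv ℝ f) from rfl, h2.fderiv]
  rfl

lemma Dv_comm {f : ℝ × ℝ → ℝ} (hf : ContDiff ℝ (⊤ : ℕ∞) f) (w w' : ℝ × ℝ) (p : ℝ × ℝ) :
    Dv w (Dv w' f) p = Dv w' (Dv w f) p := by
  rw [Dv_Dv hf, Dv_Dv hf]
  exact second_derivative_symmetric (fun y => (hf.differentiable (by simp) y).hasFDerivAt)
    ((hf.fderiv_right (m := (⊤ : ℕ∞)) (by simp)).differentiable (by simp) p).hasFDerivAt w w'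


lemma Dv_add (w : ℝ × ℝ) {f g : ℝ × ℝ → ℝ} {p : ℝ × ℝ}
    (hf : DifferentiableAt ℝ f p) (hg : DifferentiableAt ℝ g p) :
    Dv w (fun q => f q + g q) p = Dv w f p + Dv w g p := by
  show fderiv ℝ _ p w = _
  rw [fderiv_fun_add hf hg]; rfl

lemma Dv_sub (w : ℝ × ℝ) {f g : ℝ × ℝ → ℝ} {p : ℝ × ℝ}
    (hf : DifferentiableAt ℝ f p) (hg : DifferentiableAt ℝ g p) :
    Dv w (fun q => f q - g q) p = Dv w f p - Dv w g p := by
  show fderiv ℝ _ p w = _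
  rw [fderiv_fun_sub hf hg]; rfl

lemma Dv_mul (w : ℝ × ℝ) {f g : ℝ × ℝ → ℝ} {p : ℝ × ℝ}
    (hf : DifferentiableAt ℝ f p) (hg : DifferentiableAt ℝ g p) :
    Dv w (fun q => f q * g q) p = f p * Dv w g p + g p * Dv w f p := by
  show fderiv ℝ _ p w = _
  rw [fderiv_fun_mul hf hg]
  simp [Dv]

lemma Dv_const_mul (w : ℝ × ℝ) (c : ℝ) {f : ℝ × ℝ → ℝ} {p : ℝ × ℝ}
    (hf : DifferentiableAt ℝ f p) :
    Dv w (fun q => c * f q) p = c * Dv w f p := by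
  show fderiv ℝ _ p w = _
  rw [fderiv_const_mul hf]; rfl

theorem key (V : ℝ × ℝ → ℝ) (hVc : ContDiff ℝ (⊤ : ℕ∞) V)
    (hm : ∀ p, Dv (0,1) V p - 6 * V p ^ 2 * Dv (1,0) V p
      + Dv (1,0) (Dv (1,0) (Dv (1,0) V)) p = 0)
    (U : ℝ × ℝ → ℝ) (hU : U = fun q => V q * V q + Dv (1,0) V q) (p : ℝ × ℝ) :
    Dv (0,1) U p - 6 * U p * Dv (1,0) U p
      + Dv (1,0) (Dv (1,0) (Dv (1,0) U)) p = 0 := by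
  set V1 := Dv (1,0) V with hV1def
  set V2 := Dv (1,0) V1 with hV2def
  set V3 := Dv (1,0) V2 with hV3def
  set V4 := Dv (1,0) V3 with hV4def
  set Vt := Dv (0,1) V with hVtdef
  have hV1c : ContDiff ℝ (⊤ : ℕ∞) V1 := Dv_contDiff _ hVc
  have hV2c : ContDiff ℝ (⊤ : ℕ∞) V2 := Dv_contDiff _ hV1c
  have hV3c : ContDiff ℝ (⊤ : ℕ∞) V3 := Dv_contDiff _ hV2c
  have hVtc : ContDiff ℝ (⊤ : ℕ∞) Vt := Dv_contDiff _ hVc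
  have dV : ∀ q, DifferentiableAt ℝ V q := fun q => hVc.differentiable (by simp) q
  have dV1 : ∀ q, DifferentiableAt ℝ V1 q := fun q => hV1c.differentiable (by simp) q
  have dV2 : ∀ q, DifferentiableAt ℝ V2 q := fun q => hV2c.differentiable (by simp) q
  have dV3 : ∀ q, DifferentiableAt ℝ V3 q := fun q => hV3c.differentiable (by simp) q
  -- first x-derivative of U
  have hDxU : ∀ q, Dv (1,0) U q = V q * V1 q + V q * V1 q + V2 q := by
    intro q
    rw [hU, Dv_add (1,0) ((dV q).fun_mul (dV q)) (dV1 q), Dv_mul (1,0) (dV q) (dV q)]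
  have hDxUf : Dv (1,0) U = fun q => V q * V1 q + V q * V1 q + V2 q := funext hDxU
  have hDx2U : ∀ q, Dv (1,0) (Dv (1,0) U) q
      = (V q * V2 q + V1 q * V1 q + (V q * V2 q + V1 q * V1 q)) + V3 q := by
    intro q
    rw [hDxUf, Dv_add (1,0) (((dV q).fun_mul (dV1 q)).fun_add ((dV q).fun_mul (dV1 q))) (dV2 q),
      Dv_add (1,0) ((dV q).fun_mul (dV1 q)) ((dV q).fun_mul (dV1 q)), Dv_mul (1,0) (dV q) (dV1 q)]
  have hDx2Uf : Dv (1,0) (Dv (1,0) U)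
      = fun q => (V q * V2 q + V1 q * V1 q + (V q * V2 q + V1 q * V1 q)) + V3 q :=
    funext hDx2U
  have hDx3U : ∀ q, Dv (1,0) (Dv (1,0) (Dv (1,0) U)) q
      = (V q * V3 q + V2 q * V1 q + (V1 q * V2 q + V1 q * V2 q)
          + (V q * V3 q + V2 q * V1 q + (V1 q * V2 q + V1 q * V2 q))) + V4 q := by
    intro q
    rw [hDx2Uf,
      Dv_add (1,0)
        ((((dV q).fun_mul (dV2 q)).fun_add ((dV1 q).fun_mul (dV1 q))).fun_add
          (((dV q).fun_mul (dV2 q)).fun_add ((dV1 q).fun_mul (dV1 q)))) (dV3 q),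
      Dv_add (1,0) (((dV q).fun_mul (dV2 q)).fun_add ((dV1 q).fun_mul (dV1 q)))
        (((dV q).fun_mul (dV2 q)).fun_add ((dV1 q).fun_mul (dV1 q))),
      Dv_add (1,0) ((dV q).fun_mul (dV2 q)) ((dV1 q).fun_mul (dV1 q)),
      Dv_mul (1,0) (dV q) (dV2 q), Dv_mul (1,0) (dV1 q) (dV1 q)]
  have hvt : ∀ q, Vt q = 6 * (V q * V q) * V1 q - V3 q := by
    intro q; linear_combination hm q
  have hVtf : Vt = fun q => 6 * (V q * V q) * V1 q - V3 q := funext hvt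
  have hDxVt : ∀ q, Dv (1,0) Vt q
      = (6 * (V q * V q) * V2 q + V1 q * (6 * (V q * V1 q + V q * V1 q))) - V4 q := by
    intro q
    rw [hVtf, Dv_sub (1,0) (((dV q).fun_mul (dV q)).const_mul 6 |>.fun_mul (dV1 q)) (dV3 q),
      Dv_mul (1,0) (((dV q).fun_mul (dV q)).const_mul 6) (dV1 q),
      Dv_const_mul (1,0) 6 ((dV q).fun_mul (dV q)), Dv_mul (1,0) (dV q) (dV q)]
  have hDtU : Dv (0,1) U p = V p * Vt p + V p * Vt p + Dv (1,0) Vt p := by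
    rw [hU, Dv_add (0,1) ((dV p).fun_mul (dV p)) (dV1 p), Dv_mul (0,1) (dV p) (dV p)]
    have hc : Dv (0,1) V1 p = Dv (1,0) Vt p := Dv_comm hVc (0,1) (1,0) p
    rw [hc]
  have hUp : U p = V p * V p + V1 p := by rw [hU]
  rw [hDtU, hDxU p, hDx3U p, hUp, hDxVt p, hvt p]
  ring

/-- Miura transformation: if `v` is a smooth solution of the modified KdV equation
`v_t - 6v²·v_x + v_xxx = 0`, then `u = v² + v_x` solves the KdV equation
`u_t - 6u·u_x + u_xxx = 0`. -/
theorem miura_transformation (v : ℝ → ℝ → ℝ)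
    (hv : ContDiff ℝ (⊤ : ℕ∞) (fun p : ℝ × ℝ => v p.1 p.2))
    (hmkdv : ∀ x t : ℝ,
      deriv (fun t' => v x t') t - 6 * (v x t) ^ 2 * deriv (fun x' => v x' t) x
        + iteratedDeriv 3 (fun x' => v x' t) x = 0)
    (u : ℝ → ℝ → ℝ)
    (hu : ∀ x t : ℝ, u x t = (v x t) ^ 2 + deriv (fun x' => v x' t) x) :
    ∀ x t : ℝ,
      deriv (fun t' => u x t') t - 6 * u x t * deriv (fun x' => u x' t) x
        + iteratedDeriv 3 (fun x' => u x' t) x = 0 := by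
  intro x t
  have hm : ∀ p : ℝ × ℝ,
      Dv (0,1) (fun p : ℝ × ℝ => v p.1 p.2) p
        - 6 * (fun p : ℝ × ℝ => v p.1 p.2) p ^ 2 * Dv (1,0) (fun p : ℝ × ℝ => v p.1 p.2) p
        + Dv (1,0) (Dv (1,0) (Dv (1,0) (fun p : ℝ × ℝ => v p.1 p.2))) p = 0 := by
    intro p
    have h := hmkdv p.1 p.2
    have e1 : deriv (fun t' => v p.1 t') p.2
        = Dv (0,1) (fun p : ℝ × ℝ => v p.1 p.2) (p.1, p.2) := deriv_slice2 hv p.1 p.2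
    have e2 : deriv (fun x' => v x' p.2) p.1
        = Dv (1,0) (fun p : ℝ × ℝ => v p.1 p.2) (p.1, p.2) := deriv_slice1 hv p.1 p.2
    have e3 : iteratedDeriv 3 (fun x' => v x' p.2) p.1
        = Dv (1,0) (Dv (1,0) (Dv (1,0) (fun p : ℝ × ℝ => v p.1 p.2)))
            (p.1, p.2) := iter3_slice hv p.1 p.2
    rw [e1, e2, e3] at h
    exact h
  have hU : (fun q : ℝ × ℝ => u q.1 q.2)
      = fun q : ℝ × ℝ => (fun p : ℝ × ℝ => v p.1 p.2) q * (fun p : ℝ × ℝ => v p.1 p.2) q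
          + Dv (1,0) (fun p : ℝ × ℝ => v p.1 p.2) q := by
    funext q
    have e2 : deriv (fun x' => v x' q.2) q.1
        = Dv (1,0) (fun p : ℝ × ℝ => v p.1 p.2) (q.1, q.2) := deriv_slice1 hv q.1 q.2
    show u q.1 q.2 = _
    rw [hu q.1 q.2, e2]
    ring
  have hUc : ContDiff ℝ (⊤ : ℕ∞) (fun q : ℝ × ℝ => u q.1 q.2) := by
    rw [hU]; exact (hv.mul hv).add (Dv_contDiff _ hv)
  have e1 : deriv (fun t' => u x t') t
      = Dv (0,1) (fun q : ℝ × ℝ => u q.1 q.2) (x, t) := deriv_slice2 hUc x t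
  have e2 : deriv (fun x' => u x' t) x
      = Dv (1,0) (fun q : ℝ × ℝ => u q.1 q.2) (x, t) := deriv_slice1 hUc x t
  have e3 : iteratedDeriv 3 (fun x' => u x' t) x
      = Dv (1,0) (Dv (1,0) (Dv (1,0) (fun q : ℝ × ℝ => u q.1 q.2)))
          (x, t) := iter3_slice hUc x t
  rw [e1, e2, e3]
  exact key _ hv hm _ hU (x, t)
end

section
/- Let φ : ℝ² → ℂ be a smooth function of (ρ, τ) satisfying the nonlinear Schrödinger equation i·φ_τ + φ_ρρ + 2|φ|²·φ = 0. For λ ∈ ℝ define the 2×2 complex matrices U(λ) = iλ·[[1,0],[0,−1]] + i·[[0, conj(φ)],[φ, 0]] and V(λ) = 2iλ²·[[1,0],[0,−1]] + 2iλ·[[0, conj(φ)],[φ, 0]] + [[0, conj(φ_ρ)],[−φ_ρ, 0]] − i·[[|φ|², 0],[0, −|φ|²]]. Then the zero curvature equation ∂U(λ)/∂τ − ∂V(λ)/∂ρ + U(λ)·V(λ) − V(λ)·U(λ) = 0 holds at every point for every λ ∈ ℝ. -/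
/-- Entrywise partial derivative with respect to the first variable `ρ`. -/
noncomputable def matPDρ (F : ℝ → ℝ → Matrix (Fin 2) (Fin 2) ℂ)
    (ρ τ : ℝ) : Matrix (Fin 2) (Fin 2) ℂ :=
  Matrix.of fun i j => deriv (fun ρ' => F ρ' τ i j) ρ

/-- Entrywise partial derivative with respect to the second variable `τ`. -/
noncomputable def matPDτ (F : ℝ → ℝ → Matrix (Fin 2) (Fin 2) ℂ)
    (ρ τ : ℝ) : Matrix (Fin 2) (Fin 2) ℂ :=
  Matrix.of fun i j => deriv (fun τ' => F ρ τ' i j) τ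

/-- The matrix `U(λ)` of the nonlinear Schrödinger Lax pair. -/
noncomputable def nlsU (φ : ℝ → ℝ → ℂ) (lam : ℝ) (ρ τ : ℝ) :
    Matrix (Fin 2) (Fin 2) ℂ :=
  (Complex.I * (lam : ℂ)) • !![1, 0; 0, -1]
    + Complex.I • !![0, (starRingEnd ℂ) (φ ρ τ); φ ρ τ, 0]

/-- The matrix `V(λ)` of the nonlinear Schrödinger Lax pair. -/
noncomputable def nlsV (φ : ℝ → ℝ → ℂ) (lam : ℝ) (ρ τ : ℝ) :
    Matrix (Fin 2) (Fin 2) ℂ :=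
  (2 * Complex.I * (lam : ℂ) ^ 2) • !![1, 0; 0, -1]
    + (2 * Complex.I * (lam : ℂ)) • !![0, (starRingEnd ℂ) (φ ρ τ); φ ρ τ, 0]
    + !![0, (starRingEnd ℂ) (deriv (fun ρ' => φ ρ' τ) ρ);
         -(deriv (fun ρ' => φ ρ' τ) ρ), 0]
    - Complex.I • !![((‖φ ρ τ‖ : ℂ)) ^ 2, 0;
                     0, -((‖φ ρ τ‖ : ℂ)) ^ 2]

lemma abs_sq_eq (z : ℂ) : ((‖z‖ : ℂ)) ^ 2 = z * star z := by
  rw [← Complex.ofReal_pow, Complex.sq_norm, ← Complex.mul_conj]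
  rfl

/-- If `φ` is a smooth solution of the nonlinear Schrödinger equation
`i·φ_τ + φ_ρρ + 2|φ|²·φ = 0`, then the NLS Lax pair satisfies the zero curvature
equation `∂τU(λ) - ∂ρV(λ) + U(λ)V(λ) - V(λ)U(λ) = 0` for every real `λ`. -/
theorem nls_zero_curvature (φ : ℝ → ℝ → ℂ)
    (hφ : ContDiff ℝ (⊤ : ℕ∞) (fun p : ℝ × ℝ => φ p.1 p.2))
    (hnls : ∀ ρ τ : ℝ,
      Complex.I * deriv (fun τ' => φ ρ τ') τ + iteratedDeriv 2 (fun ρ' => φ ρ' τ) ρ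
        + 2 * ((‖φ ρ τ‖ : ℂ)) ^ 2 * φ ρ τ = 0) :
    ∀ (lam : ℝ) (ρ τ : ℝ),
      matPDτ (nlsU φ lam) ρ τ - matPDρ (nlsV φ lam) ρ τ
        + nlsU φ lam ρ τ * nlsV φ lam ρ τ - nlsV φ lam ρ τ * nlsU φ lam ρ τ = 0 := by
  intro lam ρ τ
  set l : ℂ := (lam : ℂ) with hl
  have hρcd : ∀ t : ℝ, ContDiff ℝ (⊤ : ℕ∞) (fun x : ℝ => φ x t) := fun t =>
    hφ.comp (contDiff_id.prodMk contDiff_const)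
  have hτcd : ∀ x : ℝ, ContDiff ℝ (⊤ : ℕ∞) (fun t : ℝ => φ x t) := fun x =>
    hφ.comp (contDiff_const.prodMk contDiff_id)
  set a : ℂ := φ ρ τ with ha
  set aρ : ℂ := deriv (fun x => φ x τ) ρ with haρ
  set aτ : ℂ := deriv (fun t => φ ρ t) τ with haτ
  set aρρ : ℂ := deriv (deriv (fun x => φ x τ)) ρ with haρρ
  have h1 : HasDerivAt (fun x => φ x τ) aρ ρ :=
    (((hρcd τ).differentiable (by simp)) ρ).hasDerivAt
  have h2 : HasDerivAt (fun t => φ ρ t) aτ τ :=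
    (((hτcd ρ).differentiable (by simp)) τ).hasDerivAt
  have h3 : HasDerivAt (deriv (fun x => φ x τ)) aρρ ρ := by
    have := (contDiff_infty_iff_deriv.mp ((hρcd τ).of_le (by simp))).2
    exact ((this.differentiable (by simp)) ρ).hasDerivAt
  -- rewrite NLS at (ρ, τ)
  have hiter : iteratedDeriv 2 (fun x => φ x τ) = deriv (deriv (fun x => φ x τ)) := by
    simp [iteratedDeriv_succ, iteratedDeriv_one]
  have hn : Complex.I * aτ + aρρ + 2 * (a * star a) * a = 0 := by
    have := hnls ρ τ
    rw [hiter, abs_sq_eq] at this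
    exact this
  have hnc : -Complex.I * star aτ + star aρρ + 2 * (a * star a) * star a = 0 := by
    have := congrArg star hn
    simpa [star_add, star_mul, Complex.star_def, map_mul, Complex.conj_I, mul_comm,
      mul_left_comm, mul_assoc] using this
  -- explicit forms of U and V
  have hU : ∀ x t : ℝ, nlsU φ lam x t =
      !![Complex.I * l, Complex.I * star (φ x t);
         Complex.I * φ x t, -(Complex.I * l)] := by
    intro x t
    ext i j
    fin_cases i <;> fin_cases j <;>
      simp [nlsU, Complex.star_def] <;> ring
  have hV : ∀ x t : ℝ, nlsV φ lam x t =
      !![2 * Complex.I * l ^ 2 - Complex.I * (φ x t * star (φ x t)),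
         2 * Complex.I * l * star (φ x t) + star (deriv (fun x' => φ x' t) x);
         2 * Complex.I * l * φ x t - deriv (fun x' => φ x' t) x,
         -(2 * Complex.I * l ^ 2) + Complex.I * (φ x t * star (φ x t))] := by
    intro x t
    ext i j
    fin_cases i <;> fin_cases j <;>
      simp [nlsV, abs_sq_eq, Complex.star_def, sub_eq_add_neg, hl] <;> ring
  -- partial derivative of U in τ
  have hPU : matPDτ (nlsU φ lam) ρ τ =
      !![0, Complex.I * star aτ; Complex.I * aτ, 0] := by
    ext i j
    fin_cases i <;> fin_cases j <;>
      simp only [matPDτ, Matrix.of_apply, hU] <;>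
      simp only [Matrix.cons_val', Matrix.cons_val_zero, Matrix.cons_val_one,
        Matrix.head_cons, Matrix.head_fin_const, Matrix.empty_val',
        Matrix.cons_val_fin_one]
    · simp
    · exact ((h2.star.const_mul Complex.I).deriv)
    · exact (h2.const_mul Complex.I).deriv
    · simp
  -- partial derivative of V in ρ
  have hPV : matPDρ (nlsV φ lam) ρ τ =
      !![-(Complex.I * (aρ * star a + a * star aρ)),
         2 * Complex.I * l * star aρ + star aρρ;
         2 * Complex.I * l * aρ - aρρ,
         Complex.I * (aρ * star a + a * star aρ)] := by
    ext i j
    fin_cases i <;> fin_cases j <;>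
      simp only [matPDρ, Matrix.of_apply, hV] <;>
      simp only [Matrix.cons_val', Matrix.cons_val_zero, Matrix.cons_val_one,
        Matrix.head_cons, Matrix.head_fin_const, Matrix.empty_val',
        Matrix.cons_val_fin_one]
    · have : HasDerivAt (fun x => 2 * Complex.I * l ^ 2 - Complex.I * (φ x τ * star (φ x τ)))
          (0 - Complex.I * (aρ * star a + a * star aρ)) ρ :=
        (hasDerivAt_const _ _).sub (((h1.mul h1.star)).const_mul Complex.I)
      simpa using this.deriv
    · exact ((h1.star.const_mul (2 * Complex.I * l)).add h3.star).deriv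
    · exact ((h1.const_mul (2 * Complex.I * l)).sub h3).deriv
    · have : HasDerivAt (fun x => -(2 * Complex.I * l ^ 2) + Complex.I * (φ x τ * star (φ x τ)))
          (0 + Complex.I * (aρ * star a + a * star aρ)) ρ :=
        (hasDerivAt_const _ _).add (((h1.mul h1.star)).const_mul Complex.I)
      simpa using this.deriv
  have hnc' : -Complex.I * (starRingEnd ℂ) aτ + (starRingEnd ℂ) aρρ
      + 2 * (a * (starRingEnd ℂ) a) * (starRingEnd ℂ) a = 0 := hnc
  have hn' : Complex.I * aτ + aρρ + 2 * (a * (starRingEnd ℂ) a) * a = 0 := hn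
  have hI : Complex.I ^ 2 = -1 := Complex.I_sq
  rw [hPU, hPV, hU ρ τ, hV ρ τ, ← haρ, ← ha]
  clear_value l a aρ aτ aρρ
  clear hφ hnls hρcd hτcd h1 h2 h3 hiter hn hnc hU hV hPU hPV hl ha haρ haτ haρρ
  ext i j
  fin_cases i <;> fin_cases j <;>
    simp [Matrix.mul_apply, Fin.sum_univ_two, Complex.star_def]
  · ring
  · linear_combination -hnc' + 2 * a * (starRingEnd ℂ) a ^ 2 * hI
  · linear_combination hn' - 2 * a ^ 2 * (starRingEnd ℂ) a * hI
  · ring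
end

section
/- Let 0 < r₋ ≤ r₊ be real numbers. Then ∫_{r₋}^{r₊} √((r − r₋)·(r₊ − r)) / r dr = (π/2)·(r₊ + r₋) − π·√(r₋·r₊). -/
/-- The Kepler radial action integral: for `0 < r₋ ≤ r₊`,
`∫_{r₋}^{r₊} √((r - r₋)(r₊ - r))/r dr = (π/2)(r₊ + r₋) - π√(r₋·r₊)`. -/
theorem kepler_radial_integral (rm rp : ℝ) (h0 : 0 < rm) (hle : rm ≤ rp) :
    ∫ r in rm..rp, Real.sqrt ((r - rm) * (rp - r)) / r
      = (Real.pi / 2) * (rp + rm) - Real.pi * Real.sqrt (rm * rp) := by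
  rcases eq_or_lt_of_le hle with heq | hlt
  · subst heq
    rw [intervalIntegral.integral_same, Real.sqrt_mul_self h0.le]
    ring
  have hba : (0:ℝ) < rp - rm := by linarith
  have hp0 : (0:ℝ) < rp := lt_trans h0 hlt
  set t := Real.sqrt (rm * rp) with ht
  have ht2 : t ^ 2 = rm * rp := Real.sq_sqrt (by positivity)
  have ht0 : 0 < t := Real.sqrt_pos.mpr (by positivity)
  set F : ℝ → ℝ := fun x => Real.sqrt ((x - rm) * (rp - x))
      - (rm + rp) / 2 * Real.arcsin (((rm + rp) - 2 * x) / (rp - rm))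
      - t * Real.arcsin (((rm + rp) * x - 2 * (rm * rp)) / (x * (rp - rm))) with hF
  have hcont : ContinuousOn F (Set.Icc rm rp) := by
    apply ContinuousOn.sub
    apply ContinuousOn.sub
    · exact (Real.continuous_sqrt.comp (by continuity)).continuousOn
    · exact (continuous_const.mul (Real.continuous_arcsin.comp (by continuity))).continuousOn
    · apply ContinuousOn.mul continuousOn_const
      apply Real.continuous_arcsin.comp_continuousOn
      apply ContinuousOn.div (by fun_prop) (by fun_prop)
      intro x hx
      have : 0 < x := lt_of_lt_of_le h0 hx.1
      positivity
  have hint : IntervalIntegrable (fun r => Real.sqrt ((r - rm) * (rp - r)) / r)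
      MeasureTheory.volume rm rp := by
    apply ContinuousOn.intervalIntegrable
    rw [Set.uIcc_of_le hle]
    apply ContinuousOn.div ((Real.continuous_sqrt.comp (by continuity)).continuousOn)
      continuousOn_id
    intro x hx
    exact (lt_of_lt_of_le h0 hx.1).ne'
  have hderiv : ∀ x ∈ Set.Ioo rm rp,
      HasDerivAt F (Real.sqrt ((x - rm) * (rp - x)) / x) x := by
    intro x hx
    have hxa : 0 < x - rm := by linarith [hx.1]
    have hbx : 0 < rp - x := by linarith [hx.2]
    have hx0 : 0 < x := lt_trans h0 hx.1
    have hprod : 0 < (x - rm) * (rp - x) := by positivity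
    set s := Real.sqrt ((x - rm) * (rp - x)) with hs
    have hs0 : 0 < s := Real.sqrt_pos.mpr hprod
    have hs2 : s ^ 2 = (x - rm) * (rp - x) := Real.sq_sqrt hprod.le
    -- first term
    have hg : HasDerivAt (fun y => (y - rm) * (rp - y)) (1 * (rp - x) + (x - rm) * (0 - 1)) x :=
      ((hasDerivAt_id x).sub_const rm).mul ((hasDerivAt_const x rp).sub (hasDerivAt_id x))
    have d1 : HasDerivAt (fun y => Real.sqrt ((y - rm) * (rp - y)))
        (1 / (2 * s) * (1 * (rp - x) + (x - rm) * (0 - 1))) x :=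
      (Real.hasDerivAt_sqrt hprod.ne').comp x hg
    -- second term: u
    have hu : HasDerivAt (fun y => ((rm + rp) - 2 * y) / (rp - rm)) ((0 - 2 * 1) / (rp - rm)) x :=
      (((hasDerivAt_const x (rm + rp)).sub ((hasDerivAt_id x).const_mul 2))).div_const _
    have hult : ((rm + rp) - 2 * x) / (rp - rm) < 1 := by
      rw [div_lt_one hba]; linarith
    have hugt : (-1 : ℝ) < ((rm + rp) - 2 * x) / (rp - rm) := by
      rw [lt_div_iff₀ hba]; linarith
    have hsu : Real.sqrt (1 - (((rm + rp) - 2 * x) / (rp - rm)) ^ 2) = 2 * s / (rp - rm) := by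
      rw [show 1 - (((rm + rp) - 2 * x) / (rp - rm)) ^ 2 = (2 * s / (rp - rm)) ^ 2 by
        field_simp
        linear_combination (-4:ℝ)*hs2]
      exact Real.sqrt_sq (by positivity)
    have d2 : HasDerivAt (fun y => Real.arcsin (((rm + rp) - 2 * y) / (rp - rm))) (-(1/s)) x := by
      have h := (Real.hasDerivAt_arcsin hugt.ne' hult.ne).comp x hu
      rw [hsu] at h
      refine h.congr_deriv ?_
      field_simp
      ring
    -- third term: v
    have hD : HasDerivAt (fun y => y * (rp - rm)) (rp - rm) x := by
      simpa using (hasDerivAt_id x).mul_const (rp - rm)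
    have hN : HasDerivAt (fun y => (rm + rp) * y - 2 * (rm * rp)) (rm + rp) x := by
      simpa using ((hasDerivAt_id x).const_mul (rm + rp)).sub_const (2 * (rm * rp))
    have hDne : x * (rp - rm) ≠ 0 := by positivity
    have hv : HasDerivAt (fun y => ((rm + rp) * y - 2 * (rm * rp)) / (y * (rp - rm)))
        (((rm + rp) * (x * (rp - rm)) - ((rm + rp) * x - 2 * (rm * rp)) * (rp - rm))
          / (x * (rp - rm)) ^ 2) x := hN.div hD hDne
    have hvlt : ((rm + rp) * x - 2 * (rm * rp)) / (x * (rp - rm)) < 1 := by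
      rw [div_lt_one (by positivity)]; nlinarith
    have hvgt : (-1 : ℝ) < ((rm + rp) * x - 2 * (rm * rp)) / (x * (rp - rm)) := by
      rw [lt_div_iff₀ (by positivity)]; nlinarith
    have hsv : Real.sqrt (1 - (((rm + rp) * x - 2 * (rm * rp)) / (x * (rp - rm))) ^ 2)
        = 2 * t * s / (x * (rp - rm)) := by
      rw [show 1 - (((rm + rp) * x - 2 * (rm * rp)) / (x * (rp - rm))) ^ 2
          = (2 * t * s / (x * (rp - rm))) ^ 2 by
        field_simp
        linear_combination (-4*t^2)*hs2 + (-4*(x-rm)*(rp-x))*ht2]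
      exact Real.sqrt_sq (by positivity)
    have d3 : HasDerivAt (fun y => Real.arcsin (((rm + rp) * y - 2 * (rm * rp)) / (y * (rp - rm))))
        (rm * rp / (t * x * s)) x := by
      have h := (Real.hasDerivAt_arcsin hvgt.ne' hvlt.ne).comp x hv
      rw [hsv] at h
      refine h.congr_deriv ?_
      field_simp
      ring
    have D : HasDerivAt F
        (1 / (2 * s) * (1 * (rp - x) + (x - rm) * (0 - 1))
          - (rm + rp) / 2 * (-(1/s)) - t * (rm * rp / (t * x * s))) x :=
      (d1.sub (d2.const_mul _)).sub (d3.const_mul t)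
    convert D using 1
    field_simp
    linear_combination 2*hs2
  rw [intervalIntegral.integral_eq_sub_of_hasDerivAt_of_le hle hcont hderiv hint]
  rw [hF]
  have e1 : ((rm + rp) - 2 * rp) / (rp - rm) = -1 := by
    rw [div_eq_iff hba.ne']; ring
  have e2 : ((rm + rp) * rp - 2 * (rm * rp)) / (rp * (rp - rm)) = 1 := by
    rw [div_eq_one_iff_eq (by positivity)]; ring
  have e3 : ((rm + rp) - 2 * rm) / (rp - rm) = 1 := by
    rw [div_eq_one_iff_eq hba.ne']; ring
  have e4 : ((rm + rp) * rm - 2 * (rm * rp)) / (rm * (rp - rm)) = -1 := by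
    rw [div_eq_iff (by positivity)]; ring
  simp only [e1, e2, e3, e4, Real.arcsin_one, Real.arcsin_neg_one, sub_self, mul_zero,
    zero_mul, Real.sqrt_zero]
  ring
end

section
/- Let n ≥ 1 and let f₁, …, fₙ : ℝⁿ × ℝⁿ → ℝ be continuously differentiable functions of (p, q) = (p₁,…,pₙ, q₁,…,qₙ) that are in involution: {f_i, f_j} = Σ_k (∂f_i/∂q_k · ∂f_j/∂p_k − ∂f_i/∂p_k · ∂f_j/∂q_k) = 0 for all i, j. Let c ∈ ℝⁿ and let p : ℝⁿ → ℝⁿ be a continuously differentiable map such that f_i(p(q), q) = c_i for all q ∈ ℝⁿ and all i, and such that the n×n matrix (∂f_i/∂p_k) evaluated at (p(q), q) is invertible for every q. Then the Jacobian matrix of p is symmetric: ∂p_k/∂q_j = ∂p_j/∂q_k for all j, k and all q ∈ ℝⁿ. -/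
/-- Key step of the Arnold–Liouville theorem: let `f₁, …, fₙ` be `C¹` functions of
`(p, q) ∈ ℝⁿ × ℝⁿ` in involution for the canonical Poisson bracket, and let
`q ↦ p(q)` be a `C¹` solution of `fᵢ(p(q), q) = cᵢ` with the matrix
`(∂fᵢ/∂pₖ)(p(q), q)` invertible for every `q`. Then the Jacobian of `p` is
symmetric: `∂pₖ/∂qⱼ = ∂pⱼ/∂qₖ`. -/
theorem arnold_liouville_jacobian_symm (n : ℕ) (hn : 1 ≤ n)
    (f : Fin n → (Fin n → ℝ) → (Fin n → ℝ) → ℝ)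
    (hf : ∀ i : Fin n,
      ContDiff ℝ 1 (fun pq : (Fin n → ℝ) × (Fin n → ℝ) => f i pq.1 pq.2))
    (hinvol : ∀ (i j : Fin n) (p q : Fin n → ℝ),
      ∑ k : Fin n,
        (fderiv ℝ (fun q' => f i p q') q (Pi.single k 1)
            * fderiv ℝ (fun p' => f j p' q) p (Pi.single k 1)
          - fderiv ℝ (fun p' => f i p' q) p (Pi.single k 1)
            * fderiv ℝ (fun q' => f j p q') q (Pi.single k 1)) = 0)
    (c : Fin n → ℝ) (p : (Fin n → ℝ) → (Fin n → ℝ))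
    (hp : ContDiff ℝ 1 p)
    (hlevel : ∀ (q : Fin n → ℝ) (i : Fin n), f i (p q) q = c i)
    (hmat : ∀ q : Fin n → ℝ,
      IsUnit (Matrix.of fun i k : Fin n =>
        fderiv ℝ (fun p' => f i p' q) (p q) (Pi.single k 1))) :
    ∀ (q : Fin n → ℝ) (j k : Fin n),
      fderiv ℝ p q (Pi.single j 1) k = fderiv ℝ p q (Pi.single k 1) j := by
  intro q j₀ k₀
  classical
  set A : Matrix (Fin n) (Fin n) ℝ :=
    Matrix.of (fun i k : Fin n =>
      fderiv ℝ (fun p' => f i p' q) (p q) (Pi.single k 1)) with hAdef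
  set B : Matrix (Fin n) (Fin n) ℝ :=
    Matrix.of (fun i k : Fin n =>
      fderiv ℝ (fun q' => f i (p q) q') q (Pi.single k 1)) with hBdef
  set J : Matrix (Fin n) (Fin n) ℝ :=
    Matrix.of (fun k j : Fin n => fderiv ℝ p q (Pi.single j 1) k) with hJdef
  have hA : IsUnit A := hmat q
  -- Chain rule : A * J = -B
  have hAJ : A * J = -B := by
    ext i j
    have hFd : Differentiable ℝ (fun pq : (Fin n → ℝ) × (Fin n → ℝ) => f i pq.1 pq.2) :=
      (hf i).differentiable one_ne_zero
    have hpd : HasFDerivAt p (fderiv ℝ p q) q :=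
      ((hp.differentiable one_ne_zero) q).hasFDerivAt
    set L := fderiv ℝ (fun pq : (Fin n → ℝ) × (Fin n → ℝ) => f i pq.1 pq.2) (p q, q) with hL
    have hFat : HasFDerivAt (fun pq : (Fin n → ℝ) × (Fin n → ℝ) => f i pq.1 pq.2) L (p q, q) :=
      (hFd (p q, q)).hasFDerivAt
    have hφ : HasFDerivAt (fun q' => ((p q', q') : (Fin n → ℝ) × (Fin n → ℝ)))
        ((fderiv ℝ p q).prod (ContinuousLinearMap.id ℝ (Fin n → ℝ))) q :=
      HasFDerivAt.prodMk hpd (hasFDerivAt_id q)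
    have hcomp0 := HasFDerivAt.comp (f := fun q' => ((p q', q') : (Fin n → ℝ) × (Fin n → ℝ))) q hFat hφ
    have hcomp : HasFDerivAt (fun q' => f i (p q') q')
        (L.comp ((fderiv ℝ p q).prod (ContinuousLinearMap.id ℝ (Fin n → ℝ)))) q := hcomp0
    have hconst : (fun q' => f i (p q') q') = fun _ => c i :=
      funext fun q' => hlevel q' i
    have h0 : HasFDerivAt (fun q' => f i (p q') q') (0 : (Fin n → ℝ) →L[ℝ] ℝ) q := by
      rw [hconst]; exact hasFDerivAt_const _ _
    have hzero : (L.comp ((fderiv ℝ p q).prod (ContinuousLinearMap.id ℝ (Fin n → ℝ)))) = 0 :=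
      hcomp.unique h0
    have hzero' : L (fderiv ℝ p q (Pi.single j 1), Pi.single j 1) = 0 := by
      have := congrArg (fun (T : (Fin n → ℝ) →L[ℝ] ℝ) => T (Pi.single j 1)) hzero
      simpa using this
    -- partial derivatives
    have hApart : ∀ k : Fin n, A i k = L (Pi.single k 1, 0) := by
      intro k
      have h1 : HasFDerivAt (fun p' : Fin n → ℝ => ((p', q) : (Fin n → ℝ) × (Fin n → ℝ)))
          (ContinuousLinearMap.inl ℝ (Fin n → ℝ) (Fin n → ℝ)) (p q) :=
        hasFDerivAt_prodMk_left _ _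
      have h20 := HasFDerivAt.comp (f := fun p' : Fin n → ℝ => ((p', q) : (Fin n → ℝ) × (Fin n → ℝ))) (p q) hFat h1
      have h2 : HasFDerivAt (fun p' => f i p' q)
          (L.comp (ContinuousLinearMap.inl ℝ (Fin n → ℝ) (Fin n → ℝ))) (p q) := h20
      have := h2.fderiv
      simp only [hAdef, Matrix.of_apply, this]
      rfl
    have hBpart : B i j = L (0, Pi.single j 1) := by
      have h1 : HasFDerivAt (fun q' : Fin n → ℝ => (((p q), q') : (Fin n → ℝ) × (Fin n → ℝ)))
          (ContinuousLinearMap.inr ℝ (Fin n → ℝ) (Fin n → ℝ)) q :=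
        hasFDerivAt_prodMk_right _ _
      have h20 := HasFDerivAt.comp (f := fun q' : Fin n → ℝ => (((p q), q') : (Fin n → ℝ) × (Fin n → ℝ))) q hFat h1
      have h2 : HasFDerivAt (fun q' => f i (p q) q')
          (L.comp (ContinuousLinearMap.inr ℝ (Fin n → ℝ) (Fin n → ℝ))) q := h20
      have := h2.fderiv
      simp only [hBdef, Matrix.of_apply, this]
      rfl
    -- decompose
    have hdec : L (fderiv ℝ p q (Pi.single j 1), Pi.single j 1)
        = (∑ k : Fin n, A i k * J k j) + B i j := by
      have hv : (fderiv ℝ p q (Pi.single j 1), (Pi.single j 1 : Fin n → ℝ))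
          = (∑ k : Fin n, J k j • ((Pi.single k 1 : Fin n → ℝ), (0 : Fin n → ℝ)))
            + ((0 : Fin n → ℝ), (Pi.single j 1 : Fin n → ℝ)) := by
        have hv1 : fderiv ℝ p q (Pi.single j 1)
            = ∑ k : Fin n, J k j • (Pi.single k 1 : Fin n → ℝ) := by
          conv_lhs => rw [pi_eq_sum_univ (fderiv ℝ p q (Pi.single j 1))]
          refine Finset.sum_congr rfl fun x _ => ?_
          simp only [hJdef, Matrix.of_apply]
          congr 1
          ext l
          simp [Pi.single_apply, eq_comm]
        ext l
        · simp [hv1, Prod.fst_sum]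
        · simp [Prod.snd_sum]
      rw [hv, map_add, map_sum]
      simp only [map_smul, smul_eq_mul]
      rw [hBpart]
      congr 1
      refine Finset.sum_congr rfl fun k _ => ?_
      rw [hApart k]; ring
    have : (∑ k : Fin n, A i k * J k j) + B i j = 0 := by rw [← hdec]; exact hzero'
    have hsum : ∑ k : Fin n, A i k * J k j = -B i j := by linarith
    simpa [Matrix.mul_apply, Matrix.neg_apply] using hsum
  -- involution : B * Aᵀ = A * Bᵀ
  have hBA : B * A.transpose = A * B.transpose := by
    ext i j
    have h := hinvol i j (p q) q
    have : ∑ k : Fin n, (B i k * A j k - A i k * B j k) = 0 := by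
      simpa [hAdef, hBdef] using h
    have h2 : ∑ k : Fin n, B i k * A j k = ∑ k : Fin n, A i k * B j k := by
      have hsub : (∑ k : Fin n, B i k * A j k) - ∑ k : Fin n, A i k * B j k = 0 := by
        rw [← Finset.sum_sub_distrib]; exact this
      linarith
    simp only [Matrix.mul_apply, Matrix.transpose_apply]
    exact h2
  -- algebra : J symmetric
  have hAT : IsUnit A.transpose := (Matrix.isUnit_transpose (A := A)).mpr hA
  have key : A * (J * A.transpose) = A * (J.transpose * A.transpose) := by
    have h1 : (A * J) * A.transpose = -(B * A.transpose) := by rw [hAJ]; simp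
    have h2 : J.transpose * A.transpose = (A * J).transpose := by
      rw [Matrix.transpose_mul]
    have h3 : A * (J.transpose * A.transpose) = A * -(B.transpose) := by
      rw [h2, hAJ]; simp
    rw [h3, ← mul_assoc] at *
    rw [h1, hBA]
    simp [Matrix.mul_neg]
  have hJA : J * A.transpose = J.transpose * A.transpose := hA.mul_left_cancel key
  have hJJ : J = J.transpose := hAT.mul_right_cancel hJA
  have := congrArg (fun M : Matrix (Fin n) (Fin n) ℝ => M k₀ j₀) hJJ
  simpa [hJdef, Matrix.transpose_apply] using this
end
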